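/- arXiv:2403.05598 — 2 statements merged into one kernel-verified Lean document; each statement's English description precedes it below -/
import Mathlib

section
/- For all reals A < B, (A·φ(A) − B·φ(B)) · (Φ(B) − Φ(A)) ≤ (φ(B) − φ(A))². (Equivalently, the Fisher information of the truncated Gaussian N^T(θ, σ², [a,b]) in its location parameter, namely (1/σ²)·(1 − ((φ(B)−φ(A))/(Φ(B)−Φ(A)))² + (Aφ(A)−Bφ(B))/(Φ(B)−Φ(A))) with A = (a−θ)/σ, B = (b−θ)/σ, is at most 1/σ², the Fisher information of the Gaussian N(θ,σ²); hence η^B ≤ η for the truncated Gaussian mechanism.) -/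
open MeasureTheory Real Filter

/-- Standard Gaussian density. -/
noncomputable def phi (x : ℝ) : ℝ := (Real.sqrt (2 * Real.pi))⁻¹ * Real.exp (-(x ^ 2) / 2)

/-- Standard Gaussian cumulative distribution function. -/
noncomputable def Phi (x : ℝ) : ℝ := ∫ t in Set.Iic x, phi t

lemma phi_pos (x : ℝ) : 0 < phi x := by
  have : 0 < Real.sqrt (2 * Real.pi) := Real.sqrt_pos.2 (by positivity)
  exact mul_pos (inv_pos.2 this) (Real.exp_pos _)

lemma phi_eq : phi = fun x : ℝ => (Real.sqrt (2 * Real.pi))⁻¹ * Real.exp (-(1/2) * x ^ 2) := by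
  funext x; unfold phi; ring_nf

lemma phi_integrable : Integrable phi := by
  rw [phi_eq]
  exact (integrable_exp_neg_mul_sq (by norm_num)).const_mul _

lemma phi_continuous : Continuous phi := by
  unfold phi; continuity

lemma hasDerivAt_neg_phi (x : ℝ) : HasDerivAt (fun y => -phi y) (x * phi x) x := by
  have h : HasDerivAt (fun y : ℝ => -(y ^ 2) / 2) (-x) x := by
    have := (hasDerivAt_pow 2 x).neg.div_const 2
    simpa using this.congr_deriv (by ring)
  have := ((h.exp).const_mul (Real.sqrt (2 * Real.pi))⁻¹).neg
  refine this.congr_deriv ?_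
  simp [phi]; ring

lemma Phi_sub (A B : ℝ) : Phi B - Phi A = ∫ t in A..B, phi t :=
  intervalIntegral.integral_Iic_sub_Iic (phi_integrable).integrableOn (phi_integrable).integrableOn

lemma tphi_integral (A B : ℝ) : ∫ t in A..B, t * phi t = phi A - phi B := by
  have := intervalIntegral.integral_eq_sub_of_hasDerivAt
    (f := fun y => -phi y) (f' := fun t => t * phi t)
    (fun x _ => hasDerivAt_neg_phi x)
    (Continuous.intervalIntegrable (by exact continuous_id.mul phi_continuous) A B)
  rw [this]; ring

/-- Key inequality implying the Fisher information of the truncated Gaussian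
is at most that of the Gaussian: `(AφA − BφB)(ΦB − ΦA) ≤ (φB − φA)²`. -/
theorem truncated_gaussian_fisher_info_ineq (A B : ℝ) (hAB : A < B) :
    (A * phi A - B * phi B) * (Phi B - Phi A) ≤ (phi B - phi A) ^ 2 := by
  have hZ : Phi B - Phi A = ∫ t in A..B, phi t := Phi_sub A B
  have hM : ∫ t in A..B, t * phi t = phi A - phi B := tphi_integral A B
  have hint : ∀ c : ℝ, IntervalIntegrable (fun t => c * phi t) volume A B :=
    fun c => ((continuous_const.mul phi_continuous).intervalIntegrable A B)
  have htint : IntervalIntegrable (fun t => t * phi t) volume A B :=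
    (continuous_id.mul phi_continuous).intervalIntegrable A B
  have hlow : A * (Phi B - Phi A) ≤ phi A - phi B := by
    rw [hZ, ← hM, ← intervalIntegral.integral_const_mul]
    exact intervalIntegral.integral_mono_on hAB.le (hint A) htint
      (fun t ht => mul_le_mul_of_nonneg_right ht.1 (phi_pos t).le)
  have hup : phi A - phi B ≤ B * (Phi B - Phi A) := by
    rw [hZ, ← hM, ← intervalIntegral.integral_const_mul]
    exact intervalIntegral.integral_mono_on hAB.le htint (hint B)
      (fun t ht => mul_le_mul_of_nonneg_right ht.2 (phi_pos t).le)
  nlinarith [mul_nonneg (sub_nonneg.2 hup) (phi_pos B).le,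
    mul_nonneg (sub_nonneg.2 hlow) (phi_pos A).le]
end

section
/- Fix α > 1, σ > 0, a > 0 and reals θ, c, and define Δ(u) = Φ((a−u)/σ) − Φ((−a−u)/σ). Let μ be the pushforward of the Gaussian measure N(θ, σ²) on ℝ under the clamping map x ↦ max(−a, min(a, x)), and let ν be the pushforward of N(θ+c, σ²) under the same map (these are the rectified Gaussians N^R(θ,σ²,[−a,a]) and N^R(θ+c,σ²,[−a,a])). Then μ is absolutely continuous with respect to ν and the Rényi divergence of order α satisfies (1/(α−1)) · log ∫ (dμ/dν)^α dν = (1/(α−1)) · log( exp((α²−α)c²/(2σ²)) · Δ(θ + (1−α)c) + Φ((−a−θ)/σ)^α · Φ((−a−θ−c)/σ)^{1−α} + Φ((θ−a)/σ)^α · Φ((θ+c−a)/σ)^{1−α} ). -/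
open MeasureTheory Real Filter

open ProbabilityTheory

/-- Mass of the Gaussian `N(u, σ²)` on `[−a, a]`. -/
noncomputable def Δ (a σ u : ℝ) : ℝ := Phi ((a - u) / σ) - Phi ((-a - u) / σ)

/-!
Clamping to `[l, u]` turns a measure on `ℝ` into an atom at each endpoint, carrying the mass of
the corresponding tail, plus its restriction to `(l, u)`. So the density of one rectified Gaussian
with respect to another is the ratio of tail masses at the endpoints and the ratio of Gaussian
densities inside. Integrating its `α`-th power, each atom contributes `p ^ α * q ^ (1 - α)`, and
inside, `φ_{m₁} ^ α * φ_{m₂} ^ (1 - α) = exp ((α² - α) (m₁ - m₂)² / 2σ²) * φ_{α m₁ + (1 - α) m₂}`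
turns the integral into the mass of a shifted Gaussian on `(l, u)`.
-/

open Set
open scoped ENNReal NNReal

lemma gaussianReal_zero_one_Iic (y : ℝ) :
    gaussianReal 0 1 (Iic y) = ENNReal.ofReal (Phi y) := by
  have hpdf : gaussianPDFReal 0 1 = phi := by
    ext x
    simp [gaussianPDFReal, phi]
  rw [gaussianReal_apply_eq_integral 0 one_ne_zero, hpdf, Phi]

lemma Phi_pos (x : ℝ) : 0 < Phi x := by
  rw [← ENNReal.ofReal_pos, ← gaussianReal_zero_one_Iic, pos_iff_ne_zero]
  intro h
  simpa using gaussianReal_absolutelyContinuous' 0 one_ne_zero h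

lemma Phi_mono : Monotone Phi := by
  intro x y hxy
  have h := measure_mono (μ := gaussianReal 0 1) (Iic_subset_Iic.2 hxy)
  rwa [gaussianReal_zero_one_Iic, gaussianReal_zero_one_Iic,
    ENNReal.ofReal_le_ofReal_iff (Phi_pos y).le] at h

lemma Phi_rpow_mul_Phi_rpow_nonneg (α x y : ℝ) : 0 ≤ Phi x ^ α * Phi y ^ (1 - α) :=
  mul_nonneg (rpow_nonneg (Phi_pos x).le _) (rpow_nonneg (Phi_pos y).le _)

section GaussianCDF

variable {σ : ℝ} (hσ : 0 < σ)
include hσ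

lemma gaussianReal_map_standardize (m : ℝ) :
    (gaussianReal m (σ ^ 2).toNNReal).map (fun x => (x - m) / σ) = gaussianReal 0 1 := by
  have : (fun x => (x - m) / σ) = (· / σ) ∘ (· - m) := rfl
  rw [this, ← Measure.map_map (by fun_prop) (by fun_prop), gaussianReal_map_sub_const,
    gaussianReal_map_div_const, sub_self, zero_div]
  congr 1
  ext
  simp [hσ.ne', sq_nonneg]

lemma gaussianReal_Iic (m b : ℝ) :
    gaussianReal m (σ ^ 2).toNNReal (Iic b) = ENNReal.ofReal (Phi ((b - m) / σ)) := by
  have hpre : (fun x => (x - m) / σ) ⁻¹' Iic ((b - m) / σ) = Iic b := by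
    ext x
    simp [div_le_div_iff_of_pos_right hσ]
  rw [← gaussianReal_zero_one_Iic, ← gaussianReal_map_standardize hσ m,
    Measure.map_apply (by fun_prop) measurableSet_Iic, hpre]

lemma gaussianReal_Ici (m b : ℝ) :
    gaussianReal m (σ ^ 2).toNNReal (Ici b) = ENNReal.ofReal (Phi ((m - b) / σ)) := by
  have hneg := gaussianReal_map_neg (μ := -m) (v := (σ ^ 2).toNNReal)
  rw [neg_neg] at hneg
  rw [← hneg, Measure.map_apply measurable_neg measurableSet_Ici, neg_preimage, neg_Ici,
    gaussianReal_Iic hσ, neg_sub_neg]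

lemma gaussianReal_Ioo {l u : ℝ} (hlu : l ≤ u) (m : ℝ) :
    gaussianReal m (σ ^ 2).toNNReal (Ioo l u) =
      ENNReal.ofReal (Phi ((u - m) / σ) - Phi ((l - m) / σ)) := by
  have := nullSingletonClass_gaussianReal (μ := m) (v := (σ ^ 2).toNNReal) (by simp [hσ.ne'])
  rw [measure_congr Ioo_ae_eq_Ioc, ← Iic_sdiff_Iic,
    measure_sdiff (Iic_subset_Iic.2 hlu) measurableSet_Iic.nullMeasurableSet (measure_ne_top _ _),
    gaussianReal_Iic hσ, gaussianReal_Iic hσ, ENNReal.ofReal_sub _ (Phi_pos _).le]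

lemma Phi_sub_Phi_nonneg {l u : ℝ} (hlu : l ≤ u) (m : ℝ) :
    0 ≤ Phi ((u - m) / σ) - Phi ((l - m) / σ) :=
  sub_nonneg.2 (Phi_mono (div_le_div_of_nonneg_right (by linarith) hσ.le))

end GaussianCDF

lemma div_rpow_mul_eq_rpow_mul_rpow {p q : ℝ} (α : ℝ) (hp : 0 ≤ p) (hq : 0 < q) :
    (p / q) ^ α * q = p ^ α * q ^ (1 - α) := by
  rw [div_rpow hp hq.le, rpow_sub hq, rpow_one]
  ring

section GaussianPDF

variable {v : ℝ≥0} (hv : v ≠ 0)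
include hv

lemma gaussianPDFReal_rpow_mul_rpow (α m₁ m₂ x : ℝ) :
    gaussianPDFReal m₁ v x ^ α * gaussianPDFReal m₂ v x ^ (1 - α) =
      exp ((α ^ 2 - α) * (m₁ - m₂) ^ 2 / (2 * v)) *
        gaussianPDFReal (α * m₁ + (1 - α) * m₂) v x := by
  have hC : 0 < (√(2 * π * v))⁻¹ := by positivity
  have hv' : (v : ℝ) ≠ 0 := by exact_mod_cast hv
  simp only [gaussianPDFReal]
  rw [mul_rpow hC.le (exp_pos _).le, mul_rpow hC.le (exp_pos _).le, ← exp_mul, ← exp_mul,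
    mul_mul_mul_comm, ← rpow_add hC, add_sub_cancel, rpow_one, ← exp_add, mul_left_comm,
    ← exp_add]
  congr 2
  field_simp
  ring

lemma withDensity_gaussianReal_rpow (α m₁ m₂ : ℝ) :
    (gaussianReal m₂ v).withDensity
        (fun x => ENNReal.ofReal ((gaussianPDFReal m₁ v x / gaussianPDFReal m₂ v x) ^ α)) =
      ENNReal.ofReal (exp ((α ^ 2 - α) * (m₁ - m₂) ^ 2 / (2 * v))) •
        gaussianReal (α * m₁ + (1 - α) * m₂) v := by
  have hpdf (x : ℝ) : gaussianPDF m₂ v x *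
        ENNReal.ofReal ((gaussianPDFReal m₁ v x / gaussianPDFReal m₂ v x) ^ α) =
      ENNReal.ofReal (exp ((α ^ 2 - α) * (m₁ - m₂) ^ 2 / (2 * v))) *
        gaussianPDF (α * m₁ + (1 - α) * m₂) v x := by
    rw [gaussianPDF, gaussianPDF, ← ENNReal.ofReal_mul (gaussianPDFReal_nonneg _ _ _),
      ← ENNReal.ofReal_mul (exp_pos _).le, mul_comm,
      div_rpow_mul_eq_rpow_mul_rpow α (gaussianPDFReal_nonneg _ _ _)
        (gaussianPDFReal_pos _ _ _ hv),
      gaussianPDFReal_rpow_mul_rpow hv]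
  rw [gaussianReal_of_var_ne_zero _ hv, gaussianReal_of_var_ne_zero _ hv,
    ← withDensity_mul _ (measurable_gaussianPDF _ _) (by fun_prop),
    ← withDensity_smul _ (measurable_gaussianPDF _ _)]
  exact congrArg _ (funext hpdf)

lemma gaussianReal_eq_withDensity (m₁ m₂ : ℝ) :
    gaussianReal m₁ v = (gaussianReal m₂ v).withDensity
      (fun x => ENNReal.ofReal (gaussianPDFReal m₁ v x / gaussianPDFReal m₂ v x)) := by
  simpa using (withDensity_gaussianReal_rpow hv 1 m₁ m₂).symm

end GaussianPDF

lemma map_max_min_eq_smul_dirac_add_restrict {l u : ℝ} (hlu : l < u) (ρ : Measure ℝ) :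
    ρ.map (fun x => max l (min u x)) =
      ρ (Iic l) • Measure.dirac l + ρ.restrict (Ioo l u) + ρ (Ici u) • Measure.dirac u := by
  have hsplit : ρ = ρ.restrict (Iic l) + ρ.restrict (Ioo l u) + ρ.restrict (Ici u) := by
    rw [← Measure.restrict_union (Iic_disjoint_Ioi le_rfl |>.mono_right Ioo_subset_Ioi_self)
        measurableSet_Ioo, Iic_union_Ioo_eq_Iio hlu,
      ← Measure.restrict_union (Iio_disjoint_Ici le_rfl) measurableSet_Ici, Iio_union_Ici,
      Measure.restrict_univ]
  have hl :
      (ρ.restrict (Iic l)).map (fun x => max l (min u x)) = ρ (Iic l) • Measure.dirac l := by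
    rw [Measure.map_congr (g := fun _ => l), Measure.map_const, Measure.restrict_apply_univ]
    filter_upwards [ae_restrict_mem measurableSet_Iic] with x hx
    simp [mem_Iic.1 hx, (mem_Iic.1 hx).trans hlu.le]
  have hI : (ρ.restrict (Ioo l u)).map (fun x => max l (min u x)) = ρ.restrict (Ioo l u) := by
    rw [Measure.map_congr (g := id), Measure.map_id]
    filter_upwards [ae_restrict_mem measurableSet_Ioo] with x hx
    simp [hx.1.le, hx.2.le]
  have hu :
      (ρ.restrict (Ici u)).map (fun x => max l (min u x)) = ρ (Ici u) • Measure.dirac u := by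
    rw [Measure.map_congr (g := fun _ => u), Measure.map_const, Measure.restrict_apply_univ]
    filter_upwards [ae_restrict_mem measurableSet_Ici] with x hx
    simp [mem_Ici.1 hx, hlu.le]
  conv_lhs => rw [hsplit]
  rw [Measure.map_add _ _ (by fun_prop), Measure.map_add _ _ (by fun_prop), hl, hI, hu]

noncomputable def rectifiedGaussianDensity (σ l u m₁ m₂ x : ℝ) : ℝ :=
  if x = l then Phi ((l - m₁) / σ) / Phi ((l - m₂) / σ)
  else if x = u then Phi ((m₁ - u) / σ) / Phi ((m₂ - u) / σ)
  else gaussianPDFReal m₁ (σ ^ 2).toNNReal x / gaussianPDFReal m₂ (σ ^ 2).toNNReal x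

/-- The Hellinger integral `∫ (dμ/dν) ^ α dν` of `μ = N^R(m₁, σ², [l, u])` against
`ν = N^R(m₂, σ², [l, u])`. -/
noncomputable def rectifiedGaussianHellinger (σ l u m₁ m₂ α : ℝ) : ℝ :=
  exp ((α ^ 2 - α) * (m₁ - m₂) ^ 2 / (2 * σ ^ 2)) *
      (Phi ((u - (α * m₁ + (1 - α) * m₂)) / σ) -
        Phi ((l - (α * m₁ + (1 - α) * m₂)) / σ)) +
    Phi ((l - m₁) / σ) ^ α * Phi ((l - m₂) / σ) ^ (1 - α) +
    Phi ((m₁ - u) / σ) ^ α * Phi ((m₂ - u) / σ) ^ (1 - α)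

section RectifiedGaussian

variable {σ l u : ℝ} (m₁ m₂ : ℝ)

lemma measurable_rectifiedGaussianDensity :
    Measurable (rectifiedGaussianDensity σ l u m₁ m₂) :=
  Measurable.ite measurableSet_eq measurable_const
    (Measurable.ite measurableSet_eq measurable_const (by fun_prop))

lemma rectifiedGaussianDensity_nonneg (x : ℝ) :
    0 ≤ rectifiedGaussianDensity σ l u m₁ m₂ x := by
  unfold rectifiedGaussianDensity
  split_ifs
  · exact div_nonneg (Phi_pos _).le (Phi_pos _).le
  · exact div_nonneg (Phi_pos _).le (Phi_pos _).le
  · exact div_nonneg (gaussianPDFReal_nonneg _ _ _) (gaussianPDFReal_nonneg _ _ _)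

variable (hσ : 0 < σ) (hlu : l < u)
include hσ hlu

lemma map_max_min_gaussianReal_eq_withDensity :
    (gaussianReal m₁ (σ ^ 2).toNNReal).map (fun x => max l (min u x)) =
      ((gaussianReal m₂ (σ ^ 2).toNNReal).map (fun x => max l (min u x))).withDensity
        (fun x => ENNReal.ofReal (rectifiedGaussianDensity σ l u m₁ m₂ x)) := by
  have hv : (σ ^ 2).toNNReal ≠ 0 := by simp [hσ.ne']
  rw [map_max_min_eq_smul_dirac_add_restrict hlu, map_max_min_eq_smul_dirac_add_restrict hlu,
    withDensity_add_measure, withDensity_add_measure, withDensity_smul_measure,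
    withDensity_smul_measure, dirac_withDensity, dirac_withDensity, smul_smul, smul_smul]
  have hl : gaussianReal m₂ (σ ^ 2).toNNReal (Iic l) *
      ENNReal.ofReal (rectifiedGaussianDensity σ l u m₁ m₂ l) =
      gaussianReal m₁ (σ ^ 2).toNNReal (Iic l) := by
    rw [rectifiedGaussianDensity, if_pos rfl, gaussianReal_Iic hσ, gaussianReal_Iic hσ,
      ← ENNReal.ofReal_mul (Phi_pos _).le, mul_div_cancel₀ _ (Phi_pos _).ne']
  have hu : gaussianReal m₂ (σ ^ 2).toNNReal (Ici u) *
      ENNReal.ofReal (rectifiedGaussianDensity σ l u m₁ m₂ u) =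
      gaussianReal m₁ (σ ^ 2).toNNReal (Ici u) := by
    rw [rectifiedGaussianDensity, if_neg hlu.ne', if_pos rfl, gaussianReal_Ici hσ,
      gaussianReal_Ici hσ, ← ENNReal.ofReal_mul (Phi_pos _).le,
      mul_div_cancel₀ _ (Phi_pos _).ne']
  have hI : ((gaussianReal m₂ (σ ^ 2).toNNReal).restrict (Ioo l u)).withDensity
      (fun x => ENNReal.ofReal (rectifiedGaussianDensity σ l u m₁ m₂ x)) =
      (gaussianReal m₁ (σ ^ 2).toNNReal).restrict (Ioo l u) := by
    rw [gaussianReal_eq_withDensity hv m₁ m₂, restrict_withDensity measurableSet_Ioo]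
    refine withDensity_congr_ae ?_
    filter_upwards [ae_restrict_mem measurableSet_Ioo] with x hx
    rw [rectifiedGaussianDensity, if_neg hx.1.ne', if_neg hx.2.ne]
  rw [hl, hu, hI]

lemma lintegral_rectifiedGaussianDensity_rpow (α : ℝ) :
    ∫⁻ x, ENNReal.ofReal (rectifiedGaussianDensity σ l u m₁ m₂ x ^ α)
        ∂(gaussianReal m₂ (σ ^ 2).toNNReal).map (fun x => max l (min u x)) =
      ENNReal.ofReal (rectifiedGaussianHellinger σ l u m₁ m₂ α) := by
  have hv : (σ ^ 2).toNNReal ≠ 0 := by simp [hσ.ne']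
  have hl : gaussianReal m₂ (σ ^ 2).toNNReal (Iic l) *
      ENNReal.ofReal (rectifiedGaussianDensity σ l u m₁ m₂ l ^ α) =
      ENNReal.ofReal (Phi ((l - m₁) / σ) ^ α * Phi ((l - m₂) / σ) ^ (1 - α)) := by
    rw [rectifiedGaussianDensity, if_pos rfl, gaussianReal_Iic hσ,
      ← ENNReal.ofReal_mul (Phi_pos _).le, mul_comm,
      div_rpow_mul_eq_rpow_mul_rpow α (Phi_pos _).le (Phi_pos _)]
  have hu : gaussianReal m₂ (σ ^ 2).toNNReal (Ici u) *
      ENNReal.ofReal (rectifiedGaussianDensity σ l u m₁ m₂ u ^ α) =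
      ENNReal.ofReal (Phi ((m₁ - u) / σ) ^ α * Phi ((m₂ - u) / σ) ^ (1 - α)) := by
    rw [rectifiedGaussianDensity, if_neg hlu.ne', if_pos rfl, gaussianReal_Ici hσ,
      ← ENNReal.ofReal_mul (Phi_pos _).le, mul_comm,
      div_rpow_mul_eq_rpow_mul_rpow α (Phi_pos _).le (Phi_pos _)]
  have hI : ∫⁻ x in Ioo l u, ENNReal.ofReal (rectifiedGaussianDensity σ l u m₁ m₂ x ^ α)
        ∂gaussianReal m₂ (σ ^ 2).toNNReal =
      ENNReal.ofReal (exp ((α ^ 2 - α) * (m₁ - m₂) ^ 2 / (2 * σ ^ 2)) *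
        (Phi ((u - (α * m₁ + (1 - α) * m₂)) / σ) -
          Phi ((l - (α * m₁ + (1 - α) * m₂)) / σ))) := by
    rw [setLIntegral_congr_fun measurableSet_Ioo (fun x hx => by
        rw [rectifiedGaussianDensity, if_neg hx.1.ne', if_neg hx.2.ne]),
      ← withDensity_apply _ measurableSet_Ioo, withDensity_gaussianReal_rpow hv,
      Measure.smul_apply, gaussianReal_Ioo hσ hlu.le, smul_eq_mul,
      ← ENNReal.ofReal_mul (exp_pos _).le, Real.coe_toNNReal _ (sq_nonneg σ)]
  have hmid := mul_nonneg (exp_pos ((α ^ 2 - α) * (m₁ - m₂) ^ 2 / (2 * σ ^ 2))).le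
    (Phi_sub_Phi_nonneg hσ hlu.le (α * m₁ + (1 - α) * m₂))
  have hatom := Phi_rpow_mul_Phi_rpow_nonneg α
  rw [map_max_min_eq_smul_dirac_add_restrict hlu, lintegral_add_measure, lintegral_add_measure,
    lintegral_smul_measure, lintegral_smul_measure, lintegral_dirac, lintegral_dirac, smul_eq_mul,
    smul_eq_mul, hl, hI, hu, rectifiedGaussianHellinger,
    ENNReal.ofReal_add (add_nonneg hmid (hatom _ _)) (hatom _ _),
    ENNReal.ofReal_add hmid (hatom _ _), add_comm (ENNReal.ofReal (_ * _))]

lemma rectifiedGaussianHellinger_nonneg (α : ℝ) :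
    0 ≤ rectifiedGaussianHellinger σ l u m₁ m₂ α :=
  add_nonneg (add_nonneg (mul_nonneg (exp_pos _).le (Phi_sub_Phi_nonneg hσ hlu.le _))
    (Phi_rpow_mul_Phi_rpow_nonneg _ _ _)) (Phi_rpow_mul_Phi_rpow_nonneg _ _ _)

lemma integral_rectifiedGaussianDensity_rpow (α : ℝ) :
    ∫ x, rectifiedGaussianDensity σ l u m₁ m₂ x ^ α
        ∂(gaussianReal m₂ (σ ^ 2).toNNReal).map (fun x => max l (min u x)) =
      rectifiedGaussianHellinger σ l u m₁ m₂ α := by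
  rw [integral_eq_lintegral_of_nonneg_ae
      (ae_of_all _ fun x => rpow_nonneg (rectifiedGaussianDensity_nonneg m₁ m₂ x) α)
      ((measurable_rectifiedGaussianDensity m₁ m₂).pow_const α).aestronglyMeasurable,
    lintegral_rectifiedGaussianDensity_rpow m₁ m₂ hσ hlu,
    ENNReal.toReal_ofReal (rectifiedGaussianHellinger_nonneg m₁ m₂ hσ hlu α)]

end RectifiedGaussian

theorem rectified_gaussian_renyi_divergence_general (α σ a θ c : ℝ)
    (hσ : 0 < σ) (ha : 0 < a) :
    (Measure.map (fun x : ℝ => max (-a) (min a x)) (gaussianReal θ (σ ^ 2).toNNReal)) ≪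
        (Measure.map (fun x : ℝ => max (-a) (min a x)) (gaussianReal (θ + c) (σ ^ 2).toNNReal)) ∧
      (1 / (α - 1)) *
          Real.log (∫ x,
            ((Measure.rnDeriv
                (Measure.map (fun x : ℝ => max (-a) (min a x)) (gaussianReal θ (σ ^ 2).toNNReal))
                (Measure.map (fun x : ℝ => max (-a) (min a x))
                  (gaussianReal (θ + c) (σ ^ 2).toNNReal)) x).toReal) ^ α
            ∂(Measure.map (fun x : ℝ => max (-a) (min a x))
                (gaussianReal (θ + c) (σ ^ 2).toNNReal))) =
        (1 / (α - 1)) *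
          Real.log (Real.exp ((α ^ 2 - α) * c ^ 2 / (2 * σ ^ 2)) * Δ a σ (θ + (1 - α) * c) +
            Phi ((-a - θ) / σ) ^ α * Phi ((-a - θ - c) / σ) ^ (1 - α) +
            Phi ((θ - a) / σ) ^ α * Phi ((θ + c - a) / σ) ^ (1 - α)) := by
  have hla : -a < a := neg_lt_self ha
  have hμ := map_max_min_gaussianReal_eq_withDensity θ (θ + c) hσ hla
  set ν := (gaussianReal (θ + c) (σ ^ 2).toNNReal).map (fun x => max (-a) (min a x))
  have : IsProbabilityMeasure ν := Measure.isProbabilityMeasure_map (by fun_prop)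
  refine ⟨hμ ▸ withDensity_absolutelyContinuous _ _, ?_⟩
  have hdens := Measure.rnDeriv_withDensity ν
    (measurable_rectifiedGaussianDensity (σ := σ) (l := -a) (u := a) θ (θ + c)).ennreal_ofReal
  rw [hμ, integral_congr_ae (hdens.mono fun x hx => by
      rw [hx, ENNReal.toReal_ofReal (rectifiedGaussianDensity_nonneg _ _ _)]),
    integral_rectifiedGaussianDensity_rpow θ (θ + c) hσ hla, rectifiedGaussianHellinger,
    show α * θ + (1 - α) * (θ + c) = θ + (1 - α) * c by ring,
    show θ - (θ + c) = -c by ring, show -a - (θ + c) = -a - θ - c by ring, neg_sq]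
  rfl

/-- Closed form for the Rényi divergence of order `α` between the rectified
Gaussians `N^R(θ, σ², [−a,a])` and `N^R(θ+c, σ², [−a,a])`, realized as
pushforwards of Gaussian measures under clamping to `[−a, a]`. -/
theorem rectified_gaussian_renyi_divergence (α σ a θ c : ℝ)
    (hα : 1 < α) (hσ : 0 < σ) (ha : 0 < a) :
    (Measure.map (fun x : ℝ => max (-a) (min a x)) (gaussianReal θ (σ ^ 2).toNNReal)) ≪
        (Measure.map (fun x : ℝ => max (-a) (min a x)) (gaussianReal (θ + c) (σ ^ 2).toNNReal)) ∧
      (1 / (α - 1)) *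
          Real.log (∫ x,
            ((Measure.rnDeriv
                (Measure.map (fun x : ℝ => max (-a) (min a x)) (gaussianReal θ (σ ^ 2).toNNReal))
                (Measure.map (fun x : ℝ => max (-a) (min a x))
                  (gaussianReal (θ + c) (σ ^ 2).toNNReal)) x).toReal) ^ α
            ∂(Measure.map (fun x : ℝ => max (-a) (min a x))
                (gaussianReal (θ + c) (σ ^ 2).toNNReal))) =
        (1 / (α - 1)) *
          Real.log (Real.exp ((α ^ 2 - α) * c ^ 2 / (2 * σ ^ 2)) * Δ a σ (θ + (1 - α) * c) +
            Phi ((-a - θ) / σ) ^ α * Phi ((-a - θ - c) / σ) ^ (1 - α) +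
            Phi ((θ - a) / σ) ^ α * Phi ((θ + c - a) / σ) ^ (1 - α)) :=
  rectified_gaussian_renyi_divergence_general α σ a θ c hσ ha
end
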